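/- arXiv:1104.1681 — 5 statements merged into one kernel-verified Lean document; each statement's English description precedes it below -/
import Mathlib

section
/- Let G be a topological group acting continuously on a topological space X. If V ⊆ G and U ⊆ X are open sets, then the set V·U = {g·x : g ∈ V, x ∈ U} equals the union of the sets g·U over all g in any fixed dense subset D of G that lie in V, i.e., V·U = ⋃ {g·U : g ∈ D ∩ V}. -/
open Set Topology Pointwise

section

variable {G X : Type*} [Group G] [TopologicalSpace G] [TopologicalSpace X] [MulAction G X]

lemma isOpen_setOf_inv_smul_mem [ContinuousInv G] [ContinuousSMul G X] {U : Set X}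
    (hU : IsOpen U) (y : X) : IsOpen {f : G | f⁻¹ • y ∈ U} :=
  hU.preimage (continuous_inv.smul continuous_const)

lemma Dense.inter_smul_eq_smul [ContinuousInv G] [ContinuousSMul G X] {D V : Set G}
    {U : Set X} (hD : Dense D) (hV : IsOpen V) (hU : IsOpen U) : (D ∩ V) • U = V • U := by
  refine (smul_subset_smul_right inter_subset_right).antisymm ?_
  rintro _ ⟨g, hg, x, hx, rfl⟩
  -- Any `f ∈ D` close enough to `g` still moves a point of `U` onto `g • x`.
  have hW : IsOpen ({f : G | f⁻¹ • g • x ∈ U} ∩ V) :=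
    (isOpen_setOf_inv_smul_mem hU _).inter hV
  obtain ⟨f, hfD, hfU, hfV⟩ := hD.exists_mem_open hW ⟨g, by simpa using hx, hg⟩
  exact ⟨f, ⟨hfD, hfV⟩, f⁻¹ • g • x, hfU, smul_inv_smul f _⟩

end

/-- If `V ⊆ G` and `U ⊆ X` are open and `D ⊆ G` is dense, then
`V • U = ⋃ {g • U : g ∈ D ∩ V}`. -/
theorem open_smul_eq_iUnion_dense {G X : Type*} [Group G] [TopologicalSpace G]
    [IsTopologicalGroup G] [TopologicalSpace X] [MulAction G X] [ContinuousSMul G X]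
    {V : Set G} {U : Set X} (hV : IsOpen V) (hU : IsOpen U)
    {D : Set G} (hD : Dense D) :
    V • U = ⋃ g ∈ D ∩ V, g • U := by
  rw [iUnion_smul_left_image, hD.inter_smul_eq_smul hV hU]
end

section
/- With Hjorth's relations ≤_α defined as in the context, each relation ≤_α is transitive: if (z,U) ≤_α (y,V) and (y,V) ≤_α (x,W), then (z,U) ≤_α (x,W). -/
open Set Topology Pointwise

/-- Hjorth's back-and-forth relation. `HLe Bas α y V x W` corresponds to
`(y,V) ≤_{1+α} (x,W)` of the paper (so `HLe Bas 0` is `≤₁`):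
`(y,V) ≤₁ (x,W)` iff `cl(V·y) ⊆ cl(W·x)`;
`(y,V) ≤_{α+1} (x,W)` iff for every basic open `V' ⊆ V` there is a basic open
`W' ⊆ W` with `(x,W') ≤_α (y,V')`; limit stages are intersections. -/
noncomputable def HLe {G X : Type*} [SMul G X] [TopologicalSpace X] (Bas : Set (Set G)) :
    Ordinal → X → Set G → X → Set G → Prop := fun α =>
  Ordinal.limitRecOn (motive := fun _ => X → Set G → X → Set G → Prop) α
    (fun y V x W => closure ((· • y) '' V) ⊆ closure ((· • x) '' W))
    (fun _ ih => fun y V x W => ∀ V' ∈ Bas, V' ⊆ V → ∃ W' ∈ Bas, W' ⊆ W ∧ ih x W' y V')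
    (fun o _ ih => fun y V x W => ∀ β, ∀ h : β < o, ih β h y V x W)


namespace HLe

variable {G X : Type*} [SMul G X] [TopologicalSpace X] {Bas : Set (Set G)}
  {x y z : X} {U V W : Set G}

theorem zero_iff :
    HLe Bas 0 y V x W ↔ closure ((· • y) '' V) ⊆ closure ((· • x) '' W) := by
  simp only [HLe, Ordinal.limitRecOn_zero]

theorem add_one_iff {α : Ordinal} :
    HLe Bas (α + 1) y V x W ↔
      ∀ V' ∈ Bas, V' ⊆ V → ∃ W' ∈ Bas, W' ⊆ W ∧ HLe Bas α x W' y V' := by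
  simp only [HLe, Ordinal.limitRecOn_add_one]

theorem iff_forall_lt_of_isSuccLimit {α : Ordinal} (hα : Order.IsSuccLimit α) :
    HLe Bas α y V x W ↔ ∀ β < α, HLe Bas β y V x W := by
  simp only [HLe, Ordinal.limitRecOn_limit _ _ _ _ hα]

/-- At successor stages the roles of the two pairs swap, so the induction hypothesis is applied
to the chain `(x,W') ≤_α (y,V') ≤_α (z,U')`. -/
theorem trans {α : Ordinal} (h₁ : HLe Bas α z U y V) (h₂ : HLe Bas α y V x W) :
    HLe Bas α z U x W := by
  induction α using Ordinal.limitRecOn generalizing x y z U V W with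
  | zero =>
    rw [zero_iff] at *
    exact h₁.trans h₂
  | add_one α ih =>
    rw [add_one_iff] at *
    intro U' hU' hU'U
    obtain ⟨V', hV', hV'V, hV'U'⟩ := h₁ U' hU' hU'U
    obtain ⟨W', hW', hW'W, hW'V'⟩ := h₂ V' hV' hV'V
    exact ⟨W', hW', hW'W, ih hW'V' hV'U'⟩
  | limit α hα ih =>
    rw [iff_forall_lt_of_isSuccLimit hα] at *
    exact fun β hβ ↦ ih β hβ (h₁ β hβ) (h₂ β hβ)

end HLe

theorem hLe_trans_general {G X : Type*} [Group G] [TopologicalSpace X] [MulAction G X]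
    (Bas : Set (Set G)) {α : Ordinal}
    {x y z : X} {U V W : Set G}
    (h1 : HLe Bas α z U y V) (h2 : HLe Bas α y V x W) : HLe Bas α z U x W :=
  h1.trans h2

/-- Each Hjorth relation `≤_α` is transitive. -/
theorem hLe_trans {G X : Type*} [Group G] [TopologicalSpace G] [IsTopologicalGroup G]
    [PolishSpace G] [TopologicalSpace X] [PolishSpace X] [MulAction G X]
    [ContinuousSMul G X] (Bas : Set (Set G)) (hBas : TopologicalSpace.IsTopologicalBasis Bas)
    (hcnt : Bas.Countable) {α : Ordinal} (hαc : α.card ≤ Cardinal.aleph0)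
    {x y z : X} {U V W : Set G} (hU : U ∈ Bas) (hV : V ∈ Bas) (hW : W ∈ Bas)
    (h1 : HLe Bas α z U y V) (h2 : HLe Bas α y V x W) : HLe Bas α z U x W :=
  hLe_trans_general Bas h1 h2
end

section
/- Let G be a Polish group acting continuously on a Polish space X, with countable bases {V_k} for G and {U_i} for X. Then for x, y ∈ X and indices k, n: cl(V_k·y) ⊆ cl(V_n·x) if and only if for every i ∈ ω, y ∈ V_k⁻¹·U_i implies x ∈ V_n⁻¹·U_i. -/
open Set Topology Pointwise

theorem TopologicalSpace.IsTopologicalBasis.closure_subset_closure_iff {X ι : Type*}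
    [TopologicalSpace X] {U : ι → Set X} (hU : IsTopologicalBasis (range U)) {A B : Set X} :
    closure A ⊆ closure B ↔ ∀ i, (A ∩ U i).Nonempty → (B ∩ U i).Nonempty := by
  rw [isClosed_closure.closure_subset_iff]
  simp only [subset_def, hU.mem_closure_iff, forall_mem_range, inter_comm (U _)]
  constructor
  · rintro h i ⟨a, haA, haU⟩
    exact h a haA i haU
  · exact fun h a haA i haU ↦ h i ⟨a, haA, haU⟩

theorem Set.mem_inv_smul_iff_image_inter_nonempty {G X : Type*} [Group G] [MulAction G X]
    {S : Set G} {T : Set X} {z : X} :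
    z ∈ S⁻¹ • T ↔ ((· • z) '' S ∩ T).Nonempty := by
  constructor
  · rintro ⟨g, hg, t, ht, rfl⟩
    exact ⟨t, ⟨g⁻¹, hg, by simp⟩, ht⟩
  · rintro ⟨_, ⟨g, hg, rfl⟩, hgz⟩
    exact ⟨g⁻¹, by simpa using hg, g • z, hgz, by simp⟩

theorem closure_smul_subset_iff_general {G X : Type*} [Group G] [TopologicalSpace X]
    [MulAction G X]
    (V : ℕ → Set G)
    (U : ℕ → Set X) (hU : TopologicalSpace.IsTopologicalBasis (Set.range U))
    (x y : X) (k n : ℕ) :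
    closure ((· • y) '' V k) ⊆ closure ((· • x) '' V n) ↔
      ∀ i : ℕ, y ∈ (V k)⁻¹ • U i → x ∈ (V n)⁻¹ • U i := by
  simp only [hU.closure_subset_closure_iff, mem_inv_smul_iff_image_inter_nonempty]

/-- `cl(V_k·y) ⊆ cl(V_n·x)` iff for every `i`, `y ∈ V_k⁻¹ • U_i → x ∈ V_n⁻¹ • U_i`. -/
theorem closure_smul_subset_iff {G X : Type*} [Group G] [TopologicalSpace G]
    [IsTopologicalGroup G] [PolishSpace G] [TopologicalSpace X] [PolishSpace X]
    [MulAction G X] [ContinuousSMul G X]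
    (V : ℕ → Set G) (hV : TopologicalSpace.IsTopologicalBasis (Set.range V))
    (U : ℕ → Set X) (hU : TopologicalSpace.IsTopologicalBasis (Set.range U))
    (x y : X) (k n : ℕ) :
    closure ((· • y) '' V k) ⊆ closure ((· • x) '' V n) ↔
      ∀ i : ℕ, y ∈ (V k)⁻¹ • U i → x ∈ (V n)⁻¹ • U i :=
  closure_smul_subset_iff_general V U hU x y k n
end

section
/- Let G be a Polish group with a fixed countable basis acting continuously on a Polish space X. For every countable ordinal α, the set H_α = {(x,y,n,k) : (x,V_k) ≤_α (y,V_n)} ⊆ X² × ω² is Borel. -/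
open Set Topology Pointwise

/-! Induction on `α`. Successor and limit steps only take countable intersections and unions,
since `V` and the ordinals below a countable `α` are countable. For the base relation, a dense
countable `D ⊆ G` reduces `cl(V_k·x) ⊆ cl(V_n·y)` to `d·x ∈ cl(V_n·y)` for `d ∈ D ∩ V_k`, and
a countable basis of `X` reduces this in turn to conditions with open sets. -/

theorem Ordinal.countable_Iio_of_card_le_aleph0 {o : Ordinal} (ho : o.card ≤ Cardinal.aleph0) :
    (Iio o).Countable := by
  rw [← countable_coe_iff, ← Cardinal.mk_le_aleph0_iff, Cardinal.mk_Iio_ordinal]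
  simpa using Cardinal.lift_le.mpr ho

theorem measurable_of_countable_index {α ι γ : Type*} [MeasurableSpace α] [MeasurableSpace ι]
    [MeasurableSpace γ] [Countable ι] [MeasurableSingletonClass ι] {f : ι → α → γ}
    (hf : ∀ i, Measurable (f i)) {g : α → ι} (hg : Measurable g) :
    Measurable fun a => f (g a) a :=
  (measurable_from_prod_countable_left (f := fun q : α × ι => f q.2 q.1) hf).comp
    (measurable_id.prodMk hg)

theorem closure_image_subset_iff_of_dense {G X : Type*} [TopologicalSpace G] [TopologicalSpace X]
    {f : G → X} (hf : Continuous f) {D A : Set G} (hD : Dense D) (hA : IsOpen A) {C : Set X}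
    (hC : IsClosed C) : closure (f '' A) ⊆ C ↔ ∀ d ∈ D, d ∈ A → f d ∈ C := by
  rw [hC.closure_subset_iff, image_subset_iff]
  refine ⟨fun h d _ hd => h hd, fun h => ?_⟩
  refine (hD.open_subset_closure_inter hA).trans ((hC.preimage hf).closure_subset_iff.2 ?_)
  rintro d ⟨hdA, hdD⟩
  exact h d hdD hdA

section HLe

variable {G X : Type*} [SMul G X] [TopologicalSpace X] (Bas : Set (Set G)) {y x : X} {V W : Set G}

theorem hLe_zero : HLe Bas 0 y V x W ↔ closure ((· • y) '' V) ⊆ closure ((· • x) '' W) := by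
  rw [HLe, Ordinal.limitRecOn_zero]

theorem hLe_add_one (α : Ordinal) :
    HLe Bas (α + 1) y V x W ↔ ∀ V' ∈ Bas, V' ⊆ V → ∃ W' ∈ Bas, W' ⊆ W ∧ HLe Bas α x W' y V' := by
  rw [HLe, Ordinal.limitRecOn_add_one]
  rfl

theorem hLe_of_isSuccLimit {o : Ordinal} (ho : Order.IsSuccLimit o) :
    HLe Bas o y V x W ↔ ∀ β < o, HLe Bas β y V x W := by
  rw [HLe, Ordinal.limitRecOn_limit _ _ _ _ ho]
  rfl

end HLe

section MeasurableHLe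

variable {G X : Type*} [SMul G X] [TopologicalSpace X] [MeasurableSpace X] (V : ℕ → Set G)

theorem measurable_hLe_add_one {α : Ordinal}
    (h : Measurable fun p : X × X × ℕ × ℕ => HLe (range V) α p.1 (V p.2.2.2) p.2.1 (V p.2.2.1)) :
    Measurable fun p : X × X × ℕ × ℕ =>
      HLe (range V) (α + 1) p.1 (V p.2.2.2) p.2.1 (V p.2.2.1) := by
  simp_rw [hLe_add_one, forall_mem_range, exists_range_iff]
  refine Measurable.forall fun k' => Measurable.imp ?_ (Measurable.exists fun n' => .and ?_ ?_)
  · exact (measurable_from_nat (f := (V k' ⊆ V ·))).comp measurable_snd.snd.snd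
  · exact (measurable_from_nat (f := (V n' ⊆ V ·))).comp measurable_snd.snd.fst
  · exact h.comp (f := fun p : X × X × ℕ × ℕ => (p.2.1, p.1, k', n'))
      (measurable_snd.fst.prodMk (measurable_fst.prodMk measurable_const))

theorem measurable_hLe_of_isSuccLimit {o : Ordinal} (ho : Order.IsSuccLimit o)
    (hc : (Iio o).Countable)
    (h : ∀ β < o, Measurable fun p : X × X × ℕ × ℕ =>
      HLe (range V) β p.1 (V p.2.2.2) p.2.1 (V p.2.2.1)) :
    Measurable fun p : X × X × ℕ × ℕ => HLe (range V) o p.1 (V p.2.2.2) p.2.1 (V p.2.2.1) := by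
  have := hc.to_subtype
  have hlim (p : X × X × ℕ × ℕ) : HLe (range V) o p.1 (V p.2.2.2) p.2.1 (V p.2.2.1) ↔
      ∀ β : Iio o, HLe (range V) β p.1 (V p.2.2.2) p.2.1 (V p.2.2.1) :=
    (hLe_of_isSuccLimit _ ho).trans ⟨fun h β => h β β.2, fun h β hβ => h ⟨β, hβ⟩⟩
  simp_rw [hlim]
  exact Measurable.forall fun β => h β β.2

end MeasurableHLe

section Action

variable {G X : Type*} [TopologicalSpace G] [TopologicalSpace X] [SecondCountableTopology X]
  [MeasurableSpace X] [BorelSpace X] [SMul G X] [ContinuousSMul G X]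

theorem measurable_smul_mem_closure_image (d : G) (B : Set G) :
    Measurable fun q : X × X => d • q.1 ∈ closure ((· • q.2) '' B) := by
  obtain ⟨b, hbc, -, hb⟩ := TopologicalSpace.exists_countable_basis X
  have := hbc.to_subtype
  have hmem (q : X × X) : d • q.1 ∈ closure ((· • q.2) '' B) ↔
      ∀ U : b, d • q.1 ∈ (U : Set X) → q.2 ∈ ⋃ g ∈ B, (g • ·) ⁻¹' (U : Set X) := by
    simp [hb.mem_closure_iff, Set.Nonempty, and_comm]
  simp_rw [hmem]
  refine Measurable.forall fun U => Measurable.imp ?_ ?_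
  · exact (hb.isOpen U.2).measurableSet.mem.comp
      ((continuous_const_smul d).comp continuous_fst).measurable
  · exact (isOpen_biUnion fun g _ => (hb.isOpen U.2).preimage (continuous_const_smul g))
      |>.measurableSet.mem.comp measurable_snd

theorem measurable_closure_image_smul_subset [SecondCountableTopology G] {A : Set G}
    (hA : IsOpen A) (B : Set G) :
    Measurable fun q : X × X => closure ((· • q.1) '' A) ⊆ closure ((· • q.2) '' B) := by
  obtain ⟨D, hDc, hD⟩ := TopologicalSpace.exists_countable_dense G
  have := hDc.to_subtype
  have hsub (q : X × X) : closure ((· • q.1) '' A) ⊆ closure ((· • q.2) '' B) ↔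
      ∀ d : D, (d : G) ∈ A → (d : G) • q.1 ∈ closure ((· • q.2) '' B) :=
    (closure_image_subset_iff_of_dense (f := (· • q.1)) (by fun_prop) hD hA
      isClosed_closure).trans ⟨fun h d => h d d.2, fun h d hd => h ⟨d, hd⟩⟩
  simp_rw [hsub]
  exact Measurable.forall fun d => measurable_const.imp (measurable_smul_mem_closure_image _ B)

theorem measurable_hLe_zero (V : ℕ → Set G) (hV : TopologicalSpace.IsTopologicalBasis (range V)) :
    Measurable fun p : X × X × ℕ × ℕ => HLe (range V) 0 p.1 (V p.2.2.2) p.2.1 (V p.2.2.1) := by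
  have := hV.secondCountableTopology (countable_range V)
  simp_rw [hLe_zero]
  exact measurable_of_countable_index
    (f := fun (i : ℕ × ℕ) (p : X × X × ℕ × ℕ) =>
      closure ((· • p.1) '' V i.2) ⊆ closure ((· • p.2.1) '' V i.1))
    (fun i => (measurable_closure_image_smul_subset (hV.isOpen ⟨i.2, rfl⟩) _).comp
      (measurable_fst.prodMk measurable_snd.fst))
    measurable_snd.snd

end Action

theorem hLe_set_borel_general {G X : Type*} [Group G] [TopologicalSpace G]
    [TopologicalSpace X] [PolishSpace X] [MeasurableSpace X] [BorelSpace X]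
    [MulAction G X] [ContinuousSMul G X]
    (V : ℕ → Set G) (hV : TopologicalSpace.IsTopologicalBasis (Set.range V))
    {α : Ordinal} (hαc : α.card ≤ Cardinal.aleph0) :
    MeasurableSet {p : X × X × ℕ × ℕ |
      HLe (Set.range V) α p.1 (V p.2.2.2) p.2.1 (V p.2.2.1)} := by
  rw [measurableSet_setOfPred]
  induction α using Ordinal.limitRecOn with
  | zero => exact measurable_hLe_zero V hV
  | add_one α ih =>
    exact measurable_hLe_add_one V (ih ((Ordinal.card_le_card (Order.le_succ α)).trans hαc))
  | limit o ho ih =>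
    exact measurable_hLe_of_isSuccLimit V ho (Ordinal.countable_Iio_of_card_le_aleph0 hαc)
      fun β hβ => ih β hβ ((Ordinal.card_le_card hβ.le).trans hαc)

/-- For every countable ordinal `α`, the set
`H_α = {(x,y,n,k) : (x,V_k) ≤_{1+α} (y,V_n)}` is Borel. -/
theorem hLe_set_borel {G X : Type*} [Group G] [TopologicalSpace G] [IsTopologicalGroup G]
    [PolishSpace G] [TopologicalSpace X] [PolishSpace X] [MeasurableSpace X] [BorelSpace X]
    [MulAction G X] [ContinuousSMul G X]
    (V : ℕ → Set G) (hV : TopologicalSpace.IsTopologicalBasis (Set.range V))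
    {α : Ordinal} (hαc : α.card ≤ Cardinal.aleph0) :
    MeasurableSet {p : X × X × ℕ × ℕ |
      HLe (Set.range V) α p.1 (V p.2.2.2) p.2.1 (V p.2.2.1)} :=
  hLe_set_borel_general V hV hαc
end

section
/- Let G be a Polish group acting continuously on a Polish space X, and let λ be a countable limit ordinal. If B ⊆ X is a G-invariant Π⁰_λ set, then B can be written as an intersection of countably many G-invariant Borel sets each of Borel rank strictly less than λ. -/
/-!
Write `B = ⋂ₙ Aₙ` with `Aₙ ∈ Σ⁰_{βₙ}`, `βₙ < λ`, and replace each `Aₙ` by its Vaught transform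
`Aₙ^* = {x | ∀* g, g • x ∈ Aₙ}`. The transform commutes with countable intersections, takes
values in invariant sets and fixes invariant sets, so `B = ⋂ₙ Aₙ^*` with each `Aₙ^*` invariant.
The transforms preserve Borel classes: by induction on `α`, `A^{ΔU} = {x | ∃* g ∈ U, g • x ∈ A}`
is `Σ⁰_α` for `A ∈ Σ⁰_α`, because localising the Baire property writes `A^{ΔU}` as a countable
union of `A^{*V}` over basic open `V ⊆ U`, and `A^{*V}` is the complement of `(Aᶜ)^{ΔV}`.
Hence `Aₙ^* ∈ Π⁰_{βₙ+2}`, and `βₙ + 2 < λ` because `λ` is a limit.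
-/

open Set Topology Pointwise

/-- The Borel pointclass `Σ⁰_α`:  `Σ⁰_1` is the open sets, and for `α > 1` a set
is `Σ⁰_α` iff it is a countable union of sets whose complements are `Σ⁰_β`, `β < α`. -/
def SigmaClass (X : Type*) [TopologicalSpace X] (α : Ordinal) : Set (Set X) :=
  if α ≤ 1 then {s | IsOpen s}
  else {s | ∃ f : ℕ → Set X,
    (∀ n, ∃ β, ∃ _ : β < α, (f n)ᶜ ∈ SigmaClass X β) ∧ s = ⋃ n, f n}
termination_by α

/-- The multiplicative Borel pointclass `Π⁰_α`. -/
def PiClass (X : Type*) [TopologicalSpace X] (α : Ordinal) : Set (Set X) :=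
  {s | sᶜ ∈ SigmaClass X α}

open TopologicalSpace

section BorelClasses

variable {X : Type*} [TopologicalSpace X] {α β : Ordinal} {s : Set X}

lemma sigmaClass_of_le_one (hα : α ≤ 1) : SigmaClass X α = {s | IsOpen s} := by
  rw [SigmaClass, if_pos hα]

lemma sigmaClass_of_one_lt (hα : 1 < α) : SigmaClass X α = {s | ∃ f : ℕ → Set X,
    (∀ n, ∃ β, ∃ _ : β < α, (f n)ᶜ ∈ SigmaClass X β) ∧ s = ⋃ n, f n} := by
  rw [SigmaClass, if_neg hα.not_ge]

lemma iUnion_mem_sigmaClass {ι : Type*} [Countable ι] {f : ι → Set X} (hα : 1 < α)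
    (hf : ∀ i, ∃ β < α, (f i)ᶜ ∈ SigmaClass X β) : ⋃ i, f i ∈ SigmaClass X α := by
  rw [sigmaClass_of_one_lt hα]
  rcases isEmpty_or_nonempty ι with hι | hι
  · refine ⟨fun _ => ∅, fun _ => ⟨0, zero_lt_one.trans hα, ?_⟩, by simp [iUnion_of_empty]⟩
    rw [compl_empty, sigmaClass_of_le_one zero_le_one]
    exact isOpen_univ
  · obtain ⟨e, he⟩ := exists_surjective_nat ι
    refine ⟨f ∘ e, fun n => ?_, (he.iUnion_comp f).symm⟩
    obtain ⟨β, hβ, hfβ⟩ := hf (e n)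
    exact ⟨β, hβ, hfβ⟩

lemma mem_piClass_of_mem_sigmaClass (hs : s ∈ SigmaClass X β) (hβα : β < α) (hα : 1 < α) :
    s ∈ PiClass X α := by
  rw [PiClass, mem_ofPred_eq, ← iUnion_const (ι := Unit) sᶜ]
  exact iUnion_mem_sigmaClass (ι := Unit) hα fun _ => ⟨β, hβα, by rwa [compl_compl]⟩

lemma exists_eq_iInter_of_mem_piClass (hα : 1 < α) (hs : s ∈ PiClass X α) :
    ∃ A : ℕ → Set X, (∀ n, ∃ β < α, A n ∈ SigmaClass X β) ∧ s = ⋂ n, A n := by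
  have hs' : sᶜ ∈ SigmaClass X α := hs
  rw [sigmaClass_of_one_lt hα] at hs'
  obtain ⟨f, hf, hsf⟩ := hs'
  refine ⟨fun n => (f n)ᶜ, fun n => ?_, by rw [← compl_iUnion, ← hsf, compl_compl]⟩
  obtain ⟨β, hβ, hfβ⟩ := hf n
  exact ⟨β, hβ, hfβ⟩

lemma baireMeasurableSet_preimage_of_mem_sigmaClass {Y : Type*} [TopologicalSpace Y]
    {f : Y → X} (hf : Continuous f) (hs : s ∈ SigmaClass X α) :
    BaireMeasurableSet (f ⁻¹' s) := by
  induction α using WellFoundedLT.induction generalizing s with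
  | ind α ih =>
    rcases le_or_gt α 1 with hα | hα
    · rw [sigmaClass_of_le_one hα] at hs
      exact (hs.preimage hf).baireMeasurableSet
    · rw [sigmaClass_of_one_lt hα] at hs
      obtain ⟨g, hg, rfl⟩ := hs
      rw [preimage_iUnion]
      refine .iUnion fun n => ?_
      obtain ⟨β, hβ, hgβ⟩ := hg n
      exact .of_compl (preimage_compl ▸ ih β hβ hgβ)

end BorelClasses

lemma not_isMeagre_inter_iff {G : Type*} [TopologicalSpace G] [BaireSpace G]
    {b : Set (Set G)} (hb : IsTopologicalBasis b) (hb₀ : ∅ ∉ b) {T U : Set G}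
    (hT : BaireMeasurableSet T) (hU : IsOpen U) :
    ¬IsMeagre (U ∩ T) ↔ ∃ V ∈ b, V ⊆ U ∧ IsMeagre (V \ T) := by
  constructor
  · intro hUT
    obtain ⟨O, hO, hTO⟩ := hT.residualEq_isOpen
    have hdiff : ∀ s t : Set G, s =ᵇ t → IsMeagre (s \ t) := fun s t hst => by
      filter_upwards [hst] with x hx
      exact fun h => h.2 ((eq_iff_iff.mp hx).mp h.1)
    obtain ⟨x, hxU, hxO⟩ : (U ∩ O).Nonempty := by
      by_contra h
      refine hUT ((hdiff T O hTO).mono fun x hx => ?_)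
      exact ⟨hx.2, fun hxO => h ⟨x, hx.1, hxO⟩⟩
    obtain ⟨V, hVb, hxV, hVUO⟩ := 
      hb.exists_subset_of_mem_open (show x ∈ U ∩ O from ⟨hxU, hxO⟩) (hU.inter hO)
    exact ⟨V, hVb, hVUO.trans inter_subset_left,
      (hdiff O T hTO.symm).mono (sdiff_subset_sdiff_left (hVUO.trans inter_subset_right))⟩
  · rintro ⟨V, hVb, hVU, hVT⟩ hUT
    have hV : V.Nonempty := nonempty_iff_ne_empty.2 (ne_of_mem_of_not_mem hVb hb₀)
    refine not_isMeagre_of_isOpen (hb.isOpen hVb) hV ((hVT.union hUT).mono fun x hx => ?_)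
    by_cases hxT : x ∈ T
    · exact Or.inr ⟨hVU hx, hxT⟩
    · exact Or.inl ⟨hx, hxT⟩

section Vaught

variable {G X : Type*} [TopologicalSpace G] [SMul G X]

def vaughtStar (A : Set X) (U : Set G) : Set X := {x | IsMeagre (U \ (· • x) ⁻¹' A)}

def vaughtDelta (A : Set X) (U : Set G) : Set X := {x | ¬IsMeagre (U ∩ (· • x) ⁻¹' A)}

lemma compl_vaughtStar (A : Set X) (U : Set G) : (vaughtStar A U)ᶜ = vaughtDelta Aᶜ U := by
  ext x
  simp [vaughtDelta, vaughtStar, preimage_compl, sdiff_eq]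

lemma vaughtDelta_iUnion (A : ℕ → Set X) (U : Set G) :
    vaughtDelta (⋃ n, A n) U = ⋃ n, vaughtDelta (A n) U := by
  ext x
  simp only [vaughtDelta, mem_ofPred_eq, mem_iUnion, preimage_iUnion, inter_iUnion]
  exact ⟨fun h => by by_contra! hn; exact h (isMeagre_iUnion hn),
    fun ⟨n, hn⟩ h => hn (h.mono (subset_iUnion (fun n => U ∩ _ ⁻¹' A n) n))⟩

lemma vaughtStar_iInter (A : ℕ → Set X) (U : Set G) :
    vaughtStar (⋂ n, A n) U = ⋂ n, vaughtStar (A n) U := by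
  refine compl_injective ?_
  simp_rw [compl_vaughtStar, compl_iInter, vaughtDelta_iUnion, compl_vaughtStar]

lemma vaughtDelta_eq_iUnion_vaughtStar [BaireSpace G] [SecondCountableTopology G] {A : Set X}
    (hA : ∀ x : X, BaireMeasurableSet ((fun g : G => g • x) ⁻¹' A)) {U : Set G} (hU : IsOpen U) :
    vaughtDelta A U = ⋃ V : {V // V ∈ countableBasis G ∧ V ⊆ U}, vaughtStar A V.1 := by
  ext x
  simp only [vaughtDelta, mem_ofPred_eq, mem_iUnion, not_isMeagre_inter_iff
    (isBasis_countableBasis G) (empty_notMem_countableBasis G) (hA x) hU]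
  exact ⟨fun ⟨V, hV, hVU, hx⟩ => ⟨⟨V, hV, hVU⟩, hx⟩, fun ⟨V, hx⟩ => ⟨V.1, V.2.1, V.2.2, hx⟩⟩

end Vaught

section ContinuousAction

variable {G X : Type*} [TopologicalSpace G] [BaireSpace G] [TopologicalSpace X] [SMul G X]
  [ContinuousSMul G X]

lemma isOpen_vaughtDelta {A : Set X} (hA : IsOpen A) {U : Set G} (hU : IsOpen U) :
    IsOpen (vaughtDelta A U) := by
  have hsect : ∀ x : X, IsOpen (U ∩ (fun g : G => g • x) ⁻¹' A) := fun x =>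
    hU.inter (hA.preimage (by fun_prop))
  have : vaughtDelta A U = ⋃ g ∈ U, (fun y : X => g • y) ⁻¹' A := by
    ext x
    simp only [vaughtDelta, mem_ofPred_eq, mem_iUnion₂]
    refine ⟨fun h => ?_, fun ⟨g, hg, hgx⟩ => not_isMeagre_of_isOpen (hsect x) ⟨g, hg, hgx⟩⟩
    obtain ⟨g, hg, hgx⟩ := nonempty_of_not_isMeagre h
    exact ⟨g, hg, hgx⟩
  rw [this]
  exact isOpen_biUnion fun g _ => hA.preimage (continuous_const_smul g)

variable [SecondCountableTopology G]

lemma vaughtDelta_mem_sigmaClass {α : Ordinal} {A : Set X} (hA : A ∈ SigmaClass X α)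
    {U : Set G} (hU : IsOpen U) : vaughtDelta A U ∈ SigmaClass X α := by
  induction α using WellFoundedLT.induction generalizing A U with
  | ind α ih =>
  rcases le_or_gt α 1 with hα | hα
  · rw [sigmaClass_of_le_one hα] at hA ⊢
    exact isOpen_vaughtDelta hA hU
  rw [sigmaClass_of_one_lt hα] at hA
  obtain ⟨f, hf, rfl⟩ := hA
  choose β hβ hfβ using hf
  have hsect : ∀ n (x : X), BaireMeasurableSet ((fun g : G => g • x) ⁻¹' f n) := fun n x =>
    .of_compl (baireMeasurableSet_preimage_of_mem_sigmaClass
      (show Continuous fun g : G => g • x by fun_prop) (hfβ n))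
  have : Countable {V // V ∈ countableBasis G ∧ V ⊆ U} :=
    ((countable_countableBasis G).mono fun _ hV => hV.1).to_subtype
  rw [vaughtDelta_iUnion]
  simp_rw [vaughtDelta_eq_iUnion_vaughtStar (hsect _) hU]
  rw [← iUnion_prod' fun p : ℕ × {V // V ∈ countableBasis G ∧ V ⊆ U} =>
    vaughtStar (f p.1) p.2.1]
  refine iUnion_mem_sigmaClass hα fun p => ⟨β p.1, hβ p.1, ?_⟩
  rw [compl_vaughtStar]
  exact ih _ (hβ p.1) (hfβ p.1) (isOpen_of_mem_countableBasis p.2.2.1)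

lemma vaughtStar_mem_piClass {α : Ordinal} {A : Set X} (hA : A ∈ PiClass X α)
    {U : Set G} (hU : IsOpen U) : vaughtStar A U ∈ PiClass X α := by
  rw [PiClass, mem_ofPred_eq, compl_vaughtStar]
  exact vaughtDelta_mem_sigmaClass hA hU

end ContinuousAction

section GroupAction

variable {G X : Type*} [Group G] [TopologicalSpace G] [MulAction G X]

lemma smul_mem_vaughtStar_univ [ContinuousMul G] {A : Set X} {x : X}
    (hx : x ∈ vaughtStar A (univ : Set G)) (h : G) : h • x ∈ vaughtStar A (univ : Set G) := by
  have : univ \ (· • (h • x)) ⁻¹' A = (· * h) ⁻¹' (univ \ (· • x) ⁻¹' A) := by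
    ext g
    simp [smul_smul]
  rw [vaughtStar, mem_ofPred_eq, this]
  exact hx.preimage_of_isOpenMap (continuous_mul_const h) (isOpenMap_mul_right h)

lemma vaughtStar_univ_eq_self [BaireSpace G] {B : Set X}
    (hB : ∀ g : G, ∀ x ∈ B, g • x ∈ B) : vaughtStar B (univ : Set G) = B := by
  ext x
  refine ⟨fun hx => ?_, fun hx => ?_⟩
  · obtain ⟨g, hg⟩ : ((· • x) ⁻¹' B : Set G).Nonempty := by
      by_contra h
      rw [not_nonempty_iff_eq_empty] at h
      refine not_isMeagre_of_isOpen (isOpen_univ : IsOpen (univ : Set G)) ⟨1, trivial⟩ ?_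
      simpa [vaughtStar, h] using hx
    simpa using hB g⁻¹ _ hg
  · have : univ \ (· • x) ⁻¹' B = (∅ : Set G) := by
      ext g
      simpa using hB g x hx
    rw [vaughtStar, mem_ofPred_eq, this]
    exact IsMeagre.empty

end GroupAction

theorem invariant_pi_limit_eq_iInter_general {G X : Type*} [Group G] [TopologicalSpace G]
    [IsTopologicalGroup G] [PolishSpace G] [TopologicalSpace X]
    [MulAction G X] [ContinuousSMul G X]
    {l : Ordinal} (hlim : Order.IsSuccLimit l)
    {B : Set X} (hinv : ∀ g : G, ∀ x ∈ B, g • x ∈ B) (hB : B ∈ PiClass X l) :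
    ∃ f : ℕ → Set X, (∀ n, ∀ g : G, ∀ x ∈ f n, g • x ∈ f n) ∧
      (∀ n, ∃ ξ, ξ < l ∧ f n ∈ SigmaClass X ξ ∪ PiClass X ξ) ∧ B = ⋂ n, f n := by
  obtain ⟨A, hA, rfl⟩ := exists_eq_iInter_of_mem_piClass (Ordinal.one_lt_of_isSuccLimit hlim) hB
  choose β hβ hAβ using hA
  refine ⟨fun n => vaughtStar (A n) (univ : Set G), fun n g x hx => smul_mem_vaughtStar_univ hx g,
    fun n => ⟨_, hlim.succ_lt (hlim.succ_lt (hβ n)), Or.inr (vaughtStar_mem_piClass ?_ isOpen_univ)⟩,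
    ?_⟩
  · exact mem_piClass_of_mem_sigmaClass (hAβ n) ((Order.lt_succ _).trans (Order.lt_succ _))
      (by simp)
  · rw [← vaughtStar_iInter, vaughtStar_univ_eq_self hinv]

/-- A `G`-invariant `Π⁰_λ` set, `λ` a countable limit ordinal, is a countable
intersection of `G`-invariant Borel sets of Borel rank `< λ`. -/
theorem invariant_pi_limit_eq_iInter {G X : Type*} [Group G] [TopologicalSpace G]
    [IsTopologicalGroup G] [PolishSpace G] [TopologicalSpace X] [PolishSpace X]
    [MulAction G X] [ContinuousSMul G X]
    {l : Ordinal} (hlim : Order.IsSuccLimit l) (hlc : l.card ≤ Cardinal.aleph0)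
    {B : Set X} (hinv : ∀ g : G, ∀ x ∈ B, g • x ∈ B) (hB : B ∈ PiClass X l) :
    ∃ f : ℕ → Set X, (∀ n, ∀ g : G, ∀ x ∈ f n, g • x ∈ f n) ∧
      (∀ n, ∃ ξ, ξ < l ∧ f n ∈ SigmaClass X ξ ∪ PiClass X ξ) ∧ B = ⋂ n, f n :=
  invariant_pi_limit_eq_iInter_general hlim hinv hB
end
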